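/- arXiv:2106.05123 — 6 statements merged into one kernel-verified Lean document; each statement's English description precedes it below -/
import Mathlib

section
/- Let f : ℕ → ℝ satisfy f(n) ≤ c·n + f(k) + f(n-k) whenever n ≥ 2 with p·n ≤ k ≤ (1-p)·n for some fixed p ∈ (0, 1/2], f(0) = f(1) = 0. Then there is a constant C (depending only on c and p) such that f(n) ≤ C · n · log n for all n ≥ 2. (Divide-and-conquer with balanced splits is O(n log n).) -/
/-- Divide-and-conquer with balanced splits is `O(n log n)`: if `f` satisfies
`f(n) ≤ c·n + f(k) + f(n-k)` for some split point `k` with `p·n ≤ k ≤ (1-p)·n`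
(with fixed `p ∈ (0, 1/2]`), and `f(0) = f(1) = 0`, then `f(n) ≤ C·n·log n`
for a constant `C` depending only on `c` and `p`. -/
theorem balanced_divide_and_conquer_nlogn (p : ℝ) (hp : p ∈ Set.Ioc (0 : ℝ) (1 / 2))
    (c : ℝ) (hc : 0 ≤ c) :
    ∃ C : ℝ, ∀ f : ℕ → ℝ, f 0 = 0 → f 1 = 0 →
      (∀ n : ℕ, 2 ≤ n → ∃ k : ℕ, p * n ≤ k ∧ (k : ℝ) ≤ (1 - p) * n ∧
        f n ≤ c * n + f k + f (n - k)) →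
      ∀ n : ℕ, 2 ≤ n → f n ≤ C * n * Real.log n := by
  obtain ⟨hp0, hp2⟩ := hp
  have h1p0 : (0:ℝ) < 1 - p := by linarith
  have hLneg : Real.log (1 - p) < 0 := Real.log_neg h1p0 (by linarith)
  set L : ℝ := -Real.log (1 - p) with hLdef
  have hLpos : 0 < L := by simp only [hLdef]; linarith
  refine ⟨c / L, ?_⟩
  intro f hf0 hf1 hrec
  set C := c / L with hC
  have hCnn : 0 ≤ C := div_nonneg hc hLpos.le
  have hCL : C * L = c := div_mul_cancel₀ c hLpos.ne'
  suffices h : ∀ n : ℕ, 1 ≤ n → f n ≤ C * n * Real.log n by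
    intro n hn; exact h n (by omega)
  intro n
  induction n using Nat.strong_induction_on with
  | _ n ih =>
    intro hn1
    rcases eq_or_lt_of_le hn1 with h1 | hn2
    · simp [← h1, hf1]
    · obtain ⟨k, hk1, hk2, hrecn⟩ := hrec n hn2
      have hnR : (2:ℝ) ≤ (n:ℝ) := by exact_mod_cast hn2
      have hpn : (0:ℝ) < p * n := mul_pos hp0 (by linarith)
      have hkposR : (0:ℝ) < (k:ℝ) := lt_of_lt_of_le hpn hk1
      have hkpos : 0 < k := by exact_mod_cast hkposR
      have hkltR : (k:ℝ) < (n:ℝ) := by nlinarith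
      have hkltn : k < n := by exact_mod_cast hkltR
      have hcast : ((n - k : ℕ) : ℝ) = (n:ℝ) - (k:ℝ) := by
        push_cast [Nat.cast_sub hkltn.le]; ring
      have hnkpos : 1 ≤ n - k := by omega
      have hfk := ih k hkltn hkpos
      have hfnk := ih (n - k) (by omega) hnkpos
      rw [hcast] at hfnk
      set M : ℝ := (1 - p) * n with hM
      have hM1 : (1:ℝ) ≤ M := by nlinarith
      have hlogk : Real.log k ≤ Real.log M := Real.log_le_log hkposR hk2
      have hnk2 : (n:ℝ) - k ≤ M := by simp only [hM]; nlinarith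
      have hnkposR : (0:ℝ) < (n:ℝ) - k := by linarith
      have hlognk : Real.log ((n:ℝ) - k) ≤ Real.log M := Real.log_le_log hnkposR hnk2
      have hb1 : C * k * Real.log k ≤ C * k * Real.log M := by
        apply mul_le_mul_of_nonneg_left hlogk (by positivity)
      have hb2 : C * ((n:ℝ) - k) * Real.log ((n:ℝ) - k) ≤ C * ((n:ℝ) - k) * Real.log M := by
        apply mul_le_mul_of_nonneg_left hlognk
        have : (0:ℝ) ≤ (n:ℝ) - k := hnkposR.le
        positivity
      have hlogM : Real.log M = Real.log (1 - p) + Real.log n :=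
        Real.log_mul h1p0.ne' (by positivity)
      have key : c * n + C * n * Real.log M ≤ C * n * Real.log n := by
        have hLp : Real.log (1 - p) = -L := by simp [hLdef]
        rw [hlogM, hLp]
        have heq : c * n + C * n * (-L + Real.log n)
            = C * n * Real.log n + (n:ℝ) * (c - C * L) := by ring
        rw [heq, show c - C * L = 0 by linarith [hCL]]
        simp
      have hsum : C * (k:ℝ) * Real.log M + C * ((n:ℝ) - k) * Real.log M
          = C * n * Real.log M := by ring
      linarith [hrecn, hfk, hfnk, hb1, hb2, key, hsum]
end

section
/- Consider a recursion tree where each node processing a list of length n does at most c·n work, each root-to-leaf path contains at most d nodes labeled 'bad', and the total input size n is fixed with children sizes summing to at most the parent size. If every node at bad-depth d is a leaf (terminating in an O(n log n) fallback), then the total work spent across all 'bad' nodes is at most c·d·n. In particular, with d = ⌈log₂ n⌉, the work on bad partitions is O(n log n). -/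
/-- A binary recursion tree: each internal node records its input size and
whether its partition was "bad". -/
inductive BTree where
  | leaf : BTree
  | node (size : ℕ) (bad : Bool) (l r : BTree) : BTree

namespace BTree

def size : BTree → ℕ
  | leaf => 0
  | node s _ _ _ => s

/-- Children sizes sum to at most the parent size. -/
def valid : BTree → Prop
  | leaf => True
  | node s _ l r => l.size + r.size ≤ s ∧ l.valid ∧ r.valid

/-- Maximum number of bad nodes on any root-to-leaf path. -/
def maxBad : BTree → ℕ
  | leaf => 0
  | node _ b l r => (if b then 1 else 0) + max l.maxBad r.maxBad

/-- Total work spent on bad nodes, where a node of size `s` does at most `c·s` work. -/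
def badWork (c : ℕ) : BTree → ℕ
  | leaf => 0
  | node s b l r => (if b then c * s else 0) + l.badWork c + r.badWork c

end BTree

lemma BTree.badWork_le_aux (c : ℕ) (t : BTree) (hv : t.valid) :
    t.badWork c ≤ c * t.maxBad * t.size := by
  induction t with
  | leaf => simp [BTree.badWork, BTree.size]
  | node s b l r ihl ihr =>
    obtain ⟨hs, hl, hr⟩ := hv
    have hml : l.maxBad ≤ max l.maxBad r.maxBad := le_max_left _ _
    have hmr : r.maxBad ≤ max l.maxBad r.maxBad := le_max_right _ _
    have Hl' : l.badWork c ≤ c * max l.maxBad r.maxBad * l.size :=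
      (ihl hl).trans (by gcongr)
    have Hr' : r.badWork c ≤ c * max l.maxBad r.maxBad * r.size :=
      (ihr hr).trans (by gcongr)
    have key : l.badWork c + r.badWork c ≤ c * max l.maxBad r.maxBad * s :=
      calc l.badWork c + r.badWork c
          ≤ c * max l.maxBad r.maxBad * l.size + c * max l.maxBad r.maxBad * r.size :=
            add_le_add Hl' Hr'
        _ = c * max l.maxBad r.maxBad * (l.size + r.size) := by ring
        _ ≤ c * max l.maxBad r.maxBad * s := by gcongr
    cases b with
    | false =>
      simpa [BTree.badWork, BTree.maxBad, BTree.size] using key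
    | true =>
      simp only [BTree.badWork, BTree.maxBad, BTree.size, if_pos]
      calc c * s + l.badWork c + r.badWork c
          ≤ c * s + c * max l.maxBad r.maxBad * s := by
            rw [add_assoc]; gcongr
        _ = c * (1 + max l.maxBad r.maxBad) * s := by ring

/-- If the root has size `n`, children sizes sum to at most parent sizes, every
root-to-leaf path has at most `d` bad nodes, and each node of size `s` does at
most `c·s` work, then the total work on bad nodes is at most `c·d·n`. In
particular with `d = ⌈log₂ n⌉` the work on bad partitions is `O(n log n)`. -/
theorem badWork_le (c d n : ℕ) (t : BTree) (hv : t.valid) (hn : t.size = n)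
    (hd : t.maxBad ≤ d) : t.badWork c ≤ c * d * n := by
  calc t.badWork c ≤ c * t.maxBad * t.size := BTree.badWork_le_aux c t hv
    _ ≤ c * d * n := by rw [hn] at *; gcongr
end

section
/- Combining the bounds on good partitions, bad partitions, and the O(n log n) fallback sort, the total running time of pattern-defeating quicksort is O(n log n): if every recursive call is either good (both sides at least a p-fraction), bad (at most log n per path before fallback), or handled by an O(n log n) fallback, then the total work is O(n log n). -/
/-- pdqsort recursion tree: every call is either a `good` partition, a `bad`
partition, or a `fallback` (heapsort) call; each node records its input size. -/
inductive PTree where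
  | fallback (size : ℕ) : PTree
  | good (size : ℕ) (l r : PTree) : PTree
  | bad (size : ℕ) (l r : PTree) : PTree

namespace PTree

def size : PTree → ℕ
  | fallback s => s
  | good s _ _ => s
  | bad s _ _ => s

/-- Validity w.r.t. split ratio `p`: children sizes sum to less than the parent
size (the pivot is removed), and a good partition leaves at least a `p`-fraction
on each side. -/
def valid (p : ℝ) : PTree → Prop
  | fallback _ => True
  | good s l r => l.size + r.size < s ∧ p * s ≤ l.size ∧ p * s ≤ r.size ∧
      l.valid p ∧ r.valid p
  | bad s l r => l.size + r.size < s ∧ l.valid p ∧ r.valid p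

/-- Maximum number of bad nodes on a root-to-leaf path. -/
def maxBad : PTree → ℕ
  | fallback _ => 0
  | good _ l r => max l.maxBad r.maxBad
  | bad _ l r => 1 + max l.maxBad r.maxBad

/-- Total work: linear work `c·s` at each partitioning node, and
`c·s·log s` for the `O(s log s)` fallback sort. -/
noncomputable def work (c : ℝ) : PTree → ℝ
  | fallback s => c * s * Real.log s
  | good s l r => c * s + l.work c + r.work c
  | bad s l r => c * s + l.work c + r.work c

end PTree

set_option maxHeartbeats 1600000 in
lemma key (p c : ℝ) (hp : 0 < p) (hp2 : p ≤ 1/2) (hc : 0 ≤ c) :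
    ∀ t : PTree, t.valid p →
      t.work c ≤ c * t.size *
        ((-Real.log (1 - p))⁻¹ * Real.log t.size + t.maxBad + Real.log t.size + 1) := by
  set δ : ℝ := -Real.log (1 - p) with hδdef
  have h1p : (0:ℝ) < 1 - p := by linarith
  have hδ : 0 < δ := by
    have : Real.log (1 - p) < 0 := Real.log_neg h1p (by linarith)
    simpa [hδdef] using neg_pos.mpr this
  set A : ℝ := δ⁻¹ with hAdef
  have hA : 0 < A := inv_pos.mpr hδ
  have hAδ : A * δ = 1 := inv_mul_cancel₀ hδ.ne'
  intro t
  induction t with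
  | fallback s =>
    intro _
    simp only [PTree.work, PTree.size, PTree.maxBad]
    have hs : (0:ℝ) ≤ (s:ℝ) := Nat.cast_nonneg s
    have hls : 0 ≤ Real.log s := Real.log_natCast_nonneg s
    nlinarith [mul_nonneg hc hs, mul_nonneg (mul_nonneg hc hs) hls]
  | good s l r ihl ihr =>
    rintro ⟨h1, h2, h3, hvl, hvr⟩
    simp only [PTree.work, PTree.size, PTree.maxBad]
    have hwl := ihl hvl
    have hwr := ihr hvr
    -- basic size facts
    have hsum : (l.size : ℝ) + r.size + 1 ≤ s := by exact_mod_cast h1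
    have hs1 : (1:ℝ) ≤ (s:ℝ) := by
      have : 1 ≤ s := Nat.one_le_iff_ne_zero.mpr (by omega)
      exact_mod_cast this
    have hlogs : 0 ≤ Real.log s := Real.log_nonneg hs1
    set B : ℝ := ((max l.maxBad r.maxBad : ℕ) : ℝ) with hB
    set K : ℝ := A * Real.log s + B + Real.log s with hK
    have hBnn : 0 ≤ B := by positivity
    have hKnn : 0 ≤ K := by positivity
    -- per-child bound
    have child : ∀ u : PTree, (u.maxBad : ℝ) ≤ B → (u.size : ℝ) ≤ (1 - p) * s →
        u.work c ≤ c * u.size * (A * Real.log u.size + u.maxBad + Real.log u.size + 1) →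
        u.work c ≤ c * u.size * K := by
      intro u hBu hsz hwu
      rcases Nat.eq_zero_or_pos u.size with h0 | hpos
      · have : u.work c ≤ 0 := by
          calc u.work c ≤ _ := hwu
          _ = 0 := by rw [h0]; push_cast; ring
        calc u.work c ≤ 0 := this
        _ ≤ c * u.size * K := by positivity
      · have hu1 : (1:ℝ) ≤ (u.size : ℝ) := by exact_mod_cast hpos
        have hlogu : Real.log u.size ≤ Real.log s - δ := by
          have h' : Real.log u.size ≤ Real.log ((1 - p) * s) :=
            Real.log_le_log (by linarith) hsz
          rw [Real.log_mul h1p.ne' (ne_of_gt (by linarith : (0:ℝ) < (s:ℝ)))] at h'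
          linarith
        have hlogu0 : 0 ≤ Real.log u.size := Real.log_nonneg hu1
        have hcu : 0 ≤ c * (u.size : ℝ) := mul_nonneg hc (le_trans zero_le_one hu1)
        have t1 : A * Real.log u.size ≤ A * (Real.log s - δ) :=
          mul_le_mul_of_nonneg_left hlogu hA.le
        have t2 : A * (Real.log s - δ) = A * Real.log s - 1 := by rw [mul_sub, hAδ]
        calc u.work c ≤ c * u.size * (A * Real.log u.size + u.maxBad + Real.log u.size + 1) := hwu
        _ ≤ c * u.size * K := by
          apply mul_le_mul_of_nonneg_left _ hcu
          rw [hK]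
          linarith
    have hl2 : (l.size : ℝ) ≤ (1 - p) * s := by nlinarith
    have hr2 : (r.size : ℝ) ≤ (1 - p) * s := by nlinarith
    have cl := child l (by rw [hB]; exact Nat.cast_le.mpr (le_max_left _ _)) hl2 hwl
    have cr := child r (by rw [hB]; exact Nat.cast_le.mpr (le_max_right _ _)) hr2 hwr
    have hln : (0:ℝ) ≤ l.size := Nat.cast_nonneg _
    have hrn : (0:ℝ) ≤ r.size := Nat.cast_nonneg _
    have : c * (l.size : ℝ) * K + c * (r.size : ℝ) * K ≤ c * s * K := by
      have hck : 0 ≤ c * K := mul_nonneg hc hKnn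
      nlinarith [mul_le_mul_of_nonneg_left (show (l.size:ℝ) + r.size ≤ s by linarith) hck]
    calc c * s + l.work c + r.work c ≤ c * s + c * l.size * K + c * r.size * K := by linarith
    _ ≤ c * s + c * s * K := by linarith
    _ = c * s * (A * Real.log s + B + Real.log s + 1) := by rw [hK]; ring
  | bad s l r ihl ihr =>
    rintro ⟨h1, hvl, hvr⟩
    simp only [PTree.work, PTree.size, PTree.maxBad]
    have hwl := ihl hvl
    have hwr := ihr hvr
    have hsum : (l.size : ℝ) + r.size + 1 ≤ s := by exact_mod_cast h1
    have hs1 : (1:ℝ) ≤ (s:ℝ) := by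
      have : 1 ≤ s := Nat.one_le_iff_ne_zero.mpr (by omega)
      exact_mod_cast this
    have hlogs : 0 ≤ Real.log s := Real.log_nonneg hs1
    set B : ℝ := ((1 + max l.maxBad r.maxBad : ℕ) : ℝ) with hB
    set K : ℝ := A * Real.log s + B + Real.log s with hK
    have hBnn : 0 ≤ B := by positivity
    have hKnn : 0 ≤ K := by positivity
    have child : ∀ u : PTree, ((u.maxBad : ℝ) + 1 ≤ B) → (u.size : ℝ) + 1 ≤ s →
        u.work c ≤ c * u.size * (A * Real.log u.size + u.maxBad + Real.log u.size + 1) →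
        u.work c ≤ c * u.size * K := by
      intro u hBu hsz hwu
      rcases Nat.eq_zero_or_pos u.size with h0 | hpos
      · have : u.work c ≤ 0 := by
          calc u.work c ≤ _ := hwu
          _ = 0 := by rw [h0]; push_cast; ring
        calc u.work c ≤ 0 := this
        _ ≤ c * u.size * K := by positivity
      · have hu1 : (1:ℝ) ≤ (u.size : ℝ) := by exact_mod_cast hpos
        have hlogu : Real.log u.size ≤ Real.log s :=
          Real.log_le_log (by linarith) (by linarith)
        have hlogu0 : 0 ≤ Real.log u.size := Real.log_nonneg hu1
        have hcu := mul_nonneg hc (le_trans zero_le_one hu1)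
        have t1 : A * Real.log u.size ≤ A * Real.log s :=
          mul_le_mul_of_nonneg_left hlogu hA.le
        calc u.work c ≤ c * u.size * (A * Real.log u.size + u.maxBad + Real.log u.size + 1) := hwu
        _ ≤ c * u.size * K := by
          apply mul_le_mul_of_nonneg_left _ hcu
          rw [hK]
          linarith
    have hBl : (l.maxBad : ℝ) + 1 ≤ B := by
      rw [hB]
      push_cast
      have := le_max_left (l.maxBad : ℝ) (r.maxBad : ℝ)
      linarith
    have hBr : (r.maxBad : ℝ) + 1 ≤ B := by
      rw [hB]
      push_cast
      have := le_max_right (l.maxBad : ℝ) (r.maxBad : ℝ)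
      linarith
    have hln : (0:ℝ) ≤ l.size := Nat.cast_nonneg _
    have hrn : (0:ℝ) ≤ r.size := Nat.cast_nonneg _
    have cl := child l hBl (by linarith) hwl
    have cr := child r hBr (by linarith) hwr
    have : c * (l.size : ℝ) * K + c * (r.size : ℝ) * K ≤ c * s * K := by
      have hck : 0 ≤ c * K := mul_nonneg hc hKnn
      nlinarith [mul_le_mul_of_nonneg_left (show (l.size:ℝ) + r.size ≤ s by linarith) hck]
    calc c * s + l.work c + r.work c ≤ c * s + c * l.size * K + c * r.size * K := by linarith
    _ ≤ c * s + c * s * K := by linarith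
    _ = c * s * (A * Real.log s + B + Real.log s + 1) := by rw [hK]; ring


/-- Combining the bounds on good partitions, bad partitions and the fallback
sort: if every path contains at most `⌈log₂ n⌉` bad nodes and good partitions
split in ratio at least `p : (1-p)`, the total running time of pattern-defeating
quicksort is `O(n log n)`. -/
theorem pdqsort_nlogn (p : ℝ) (hp : p ∈ Set.Ioc (0 : ℝ) (1 / 2))
    (c : ℝ) (hc : 0 ≤ c) :
    ∃ C : ℝ, ∀ n : ℕ, 2 ≤ n → ∀ t : PTree, t.valid p → t.size = n →
      t.maxBad ≤ Nat.clog 2 n → t.work c ≤ C * n * Real.log n := by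
  obtain ⟨hp0, hp2⟩ := hp
  refine ⟨c * ((-Real.log (1 - p))⁻¹ + 1 + 3 / Real.log 2), ?_⟩
  intro n hn t hv hsz hbad
  have hk := key p c hp0 hp2 hc t hv
  rw [hsz] at hk
  have hg : (0:ℝ) < Real.log 2 := Real.log_pos (by norm_num)
  have hn1 : 1 < n := hn
  have hnR : (2:ℝ) ≤ (n:ℝ) := by exact_mod_cast hn
  have hL2 : Real.log 2 ≤ Real.log n := Real.log_le_log (by norm_num) hnR
  have hL : 0 < Real.log n := lt_of_lt_of_le hg hL2
  -- bound on clog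
  have hkpos : 0 < Nat.clog 2 n := Nat.clog_pos (by norm_num) hn1
  have hlt : (2:ℕ) ^ (Nat.clog 2 n - 1) < n := Nat.pow_pred_clog_lt_self (by norm_num) hn1
  have hltR : ((2:ℝ)) ^ (Nat.clog 2 n - 1) < (n:ℝ) := by exact_mod_cast hlt
  have hclog : ((Nat.clog 2 n : ℝ) - 1) * Real.log 2 ≤ Real.log n := by
    have h' : Real.log ((2:ℝ) ^ (Nat.clog 2 n - 1)) ≤ Real.log n :=
      Real.log_le_log (by positivity) hltR.le
    rw [Real.log_pow] at h'
    have hcast : ((Nat.clog 2 n - 1 : ℕ) : ℝ) = (Nat.clog 2 n : ℝ) - 1 := by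
      have := Nat.cast_sub (R := ℝ) hkpos
      simpa using this
    rw [hcast] at h'
    exact h'
  have hBb : (t.maxBad : ℝ) ≤ Real.log n / Real.log 2 + 1 := by
    have h1 : (t.maxBad : ℝ) ≤ (Nat.clog 2 n : ℝ) := by exact_mod_cast hbad
    have h2 : (Nat.clog 2 n : ℝ) - 1 ≤ Real.log n / Real.log 2 := by
      rw [le_div_iff₀ hg]; exact hclog
    linarith
  -- combine
  have hbig : (-Real.log (1 - p))⁻¹ * Real.log n + (t.maxBad : ℝ) + Real.log n + 1 ≤
      ((-Real.log (1 - p))⁻¹ + 1 + 3 / Real.log 2) * Real.log n := by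
    have e1 : Real.log n / Real.log 2 * Real.log 2 = Real.log n :=
      div_mul_cancel₀ _ hg.ne'
    have e2 : 3 / Real.log 2 * Real.log n * Real.log 2 = 3 * Real.log n := by
      field_simp
    have e3 : Real.log n / Real.log 2 + 2 ≤ 3 / Real.log 2 * Real.log n := by
      nlinarith
    nlinarith
  have hcn : (0:ℝ) ≤ c * n := by positivity
  calc t.work c ≤ c * n * ((-Real.log (1 - p))⁻¹ * Real.log n + t.maxBad + Real.log n + 1) := hk
  _ ≤ c * n * (((-Real.log (1 - p))⁻¹ + 1 + 3 / Real.log 2) * Real.log n) :=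
      mul_le_mul_of_nonneg_left hbig hcn
  _ = c * ((-Real.log (1 - p))⁻¹ + 1 + 3 / Real.log 2) * n * Real.log n := by ring
end

section
/- In a binary search tree built by quicksort's pivot choices (each node stores a pivot; left subtree handles elements strictly less, right subtree handles elements greater or equal per partition_right, or elements ≤ pivot go left per partition_left when the predecessor equals the pivot), any predecessor (the element immediately preceding a recursive subsequence in the original array) of a non-leftmost subsequence equals the pivot of some ancestor node. -/
/-- A quicksort recursion tree over contiguous index intervals: a `node r l rgt`
partitions its interval around a pivot placed at position `r`, the left child
handling the subsequence before `r` and the right child the one after. -/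
inductive QTree where
  | leaf : QTree
  | node (r : ℕ) (l rgt : QTree) : QTree

namespace QTree

/-- Well-formedness over the interval `[lo, hi)`. -/
def WF : ℕ → ℕ → QTree → Prop
  | _, _, leaf => True
  | lo, hi, node r l rgt => lo ≤ r ∧ r < hi ∧ WF lo r l ∧ WF (r + 1) hi rgt

/-- `Sub lo hi t lo' hi' P` : in the tree `t` handling the interval `[lo, hi)`,
some recursive call handles the subsequence `[lo', hi')` and the set of pivot
positions of its (strict) ancestors is `P`. -/
inductive Sub : ℕ → ℕ → QTree → ℕ → ℕ → Set ℕ → Prop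
  | refl (lo hi : ℕ) (t : QTree) : Sub lo hi t lo hi ∅
  | left {lo hi r lo' hi' P} {l rgt : QTree} :
      Sub lo r l lo' hi' P → Sub lo hi (node r l rgt) lo' hi' (insert r P)
  | right {lo hi r lo' hi' P} {l rgt : QTree} :
      Sub (r + 1) hi rgt lo' hi' P → Sub lo hi (node r l rgt) lo' hi' (insert r P)

end QTree

theorem QTree.sub_lo_le {lo hi lo' hi' P} {t : QTree} (h : QTree.Sub lo hi t lo' hi' P)
    (hwf : QTree.WF lo hi t) : lo ≤ lo' := by
  induction h with
  | refl => exact le_refl _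
  | left _ ih => exact ih hwf.2.2.1
  | right _ ih =>
      exact le_trans (le_trans hwf.1 (Nat.le_succ _)) (ih hwf.2.2.2)

theorem QTree.sub_pred {lo hi lo' hi' P} {t : QTree} (h : QTree.Sub lo hi t lo' hi' P)
    (hwf : QTree.WF lo hi t) (hlt : lo < lo') : lo' - 1 ∈ P := by
  induction h with
  | refl => exact absurd hlt (lt_irrefl _)
  | left _ ih => exact Set.mem_insert_of_mem _ (ih hwf.2.2.1 hlt)
  | right hs ih =>
      rcases eq_or_lt_of_le (QTree.sub_lo_le hs hwf.2.2.2) with he | hl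
      · rw [← he]; simp
      · exact Set.mem_insert_of_mem _ (ih hwf.2.2.2 hl)

/-- Lemma 1 of the pdqsort paper: in a quicksort recursion tree on the whole
array `[0, n)`, the predecessor (element at position `lo' - 1`) of any
non-leftmost subsequence `[lo', hi')` is the pivot of some ancestor. -/
theorem predecessor_is_ancestor_pivot (n : ℕ) (t : QTree) (hwf : QTree.WF 0 n t)
    (lo' hi' : ℕ) (P : Set ℕ) (hsub : QTree.Sub 0 n t lo' hi' P) (hpos : 0 < lo') :
    lo' - 1 ∈ P :=
  QTree.sub_pred hsub hwf hpos
end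

section
/- Branchless offset computation is correct: for a block of m elements a[0..m-1] and pivot p, the loop 'num = 0; for i in 0..m-1: offsets[num] = i; num += (a[i] ≥ p)' terminates with num equal to the number of indices i with a[i] ≥ p, and offsets[0..num-1] equal to those indices in increasing order. -/
variable {α : Type*} [LinearOrder α]

/-- One iteration of the branchless offset loop: unconditionally write the
current index into `offsets[num]`, then increment `num` by 1 if `a[i] ≥ p`
and by 0 otherwise. -/
def offsetStep (a : ℕ → α) (p : α) (st : Array ℕ × ℕ) (i : ℕ) : Array ℕ × ℕ :=
  (st.1.set! st.2 i, st.2 + if p ≤ a i then 1 else 0)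

/-- Running the loop for `i = 0, …, m-1`. -/
def offsetRun (a : ℕ → α) (p : α) (m : ℕ) (offsets0 : Array ℕ) : Array ℕ × ℕ :=
  (List.range m).foldl (offsetStep a p) (offsets0, 0)

/-! Loop invariant: processing indices `l` from the state `(offsets, num)` adds the number of
selected indices to `num` and appends exactly those indices to the prefix `offsets[0..num-1]`.
The unconditional write to `offsets[num]` lies just outside the kept prefix and enters it only
when `num` is incremented, i.e. exactly when the index is selected. Since `set!` is a no-op out
of bounds, the invariant needs room: `num` plus the number of remaining indices fits in the
array. -/

section OffsetLoop

variable (a : ℕ → α) (p : α)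

theorem offsetStep_snd (st : Array ℕ × ℕ) (i : ℕ) :
    (offsetStep a p st i).2 = st.2 + ([i].filter (fun j => p ≤ a j)).length := by
  by_cases h : p ≤ a i <;> simp [offsetStep, h]

theorem take_offsetStep (st : Array ℕ × ℕ) (i : ℕ) (hst : st.2 < st.1.size) :
    (offsetStep a p st i).1.toList.take (offsetStep a p st i).2 =
      st.1.toList.take st.2 ++ [i].filter (fun j => p ≤ a j) := by
  by_cases h : p ≤ a i <;>
    simp [offsetStep, h, List.take_add_one, List.take_set_of_le, hst]

theorem foldl_offsetStep_snd (l : List ℕ) (st : Array ℕ × ℕ) :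
    (l.foldl (offsetStep a p) st).2 = st.2 + (l.filter (fun j => p ≤ a j)).length := by
  induction l generalizing st with
  | nil => simp
  | cons i l ih =>
    rw [List.foldl_cons, ih, offsetStep_snd, add_assoc, ← List.length_append,
      ← List.filter_append, List.singleton_append]

theorem take_foldl_offsetStep (l : List ℕ) (st : Array ℕ × ℕ)
    (hst : st.2 + l.length ≤ st.1.size) :
    (l.foldl (offsetStep a p) st).1.toList.take (l.foldl (offsetStep a p) st).2 =
      st.1.toList.take st.2 ++ l.filter (fun j => p ≤ a j) := by
  induction l generalizing st with
  | nil => simp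
  | cons i l ih =>
    rw [List.length_cons] at hst
    have hfilter : ([i].filter (fun j => p ≤ a j)).length ≤ 1 := List.length_filter_le _ _
    have hnext : (offsetStep a p st i).2 + l.length ≤ (offsetStep a p st i).1.size := by
      rw [offsetStep_snd]
      simp only [offsetStep, Array.size_set!]
      omega
    rw [List.foldl_cons, ih _ hnext, take_offsetStep a p st i (by omega),
      List.append_assoc, ← List.filter_append, List.singleton_append]

end OffsetLoop

/-- Correctness of BlockQuicksort's branchless offset computation: the loop
terminates with `num` equal to the number of indices `i < m` with `a[i] ≥ p`,
and `offsets[0..num-1]` equal to those indices in increasing order. -/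
theorem offsetRun_correct (a : ℕ → α) (p : α) (m : ℕ) (offsets0 : Array ℕ)
    (hsize : m ≤ offsets0.size) :
    (offsetRun a p m offsets0).2 =
      ((List.range m).filter (fun i => p ≤ a i)).length ∧
    ((offsetRun a p m offsets0).1.toList.take (offsetRun a p m offsets0).2) =
      (List.range m).filter (fun i => p ≤ a i) := by
  unfold offsetRun
  constructor
  · simpa using foldl_offsetStep_snd a p (List.range m) (offsets0, 0)
  · simpa using take_foldl_offsetStep a p (List.range m) (offsets0, 0) (by simpa using hsize)
end

section
/- Swapping paired misplaced elements restores partition order for the paired prefix: suppose indices i₁ < i₂ < ... < i_m (in the left block) satisfy a[i_t] ≥ p and indices j₁ > j₂ > ... > j_m (in the right block) satisfy a[j_t] < p, with all i_t < all j_t. After swapping a[i_t] with a[j_t] for t = 1..m, every position i_t holds an element < p and every position j_t holds an element ≥ p. -/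
/-- Swap the values of `f` at positions `x` and `y`. -/
def swapAt {α : Type*} (f : ℕ → α) (x y : ℕ) : ℕ → α :=
  Function.update (Function.update f x (f y)) y (f x)

/-- Correctness of the unconditional swap phase of block partitioning: if
positions `i 0 < i 1 < … < i (m-1)` in the left block all hold elements `≥ p`,
positions `j 0 > j 1 > … > j (m-1)` in the right block all hold elements `< p`,
and every `i s` is to the left of every `j t`, then after swapping `a[i t]`
with `a[j t]` for each `t`, every position `i t` holds an element `< p` and
every position `j t` holds an element `≥ p`. -/
theorem block_swaps_correct {α : Type*} [LinearOrder α]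
    (a : ℕ → α) (p : α) (m : ℕ) (i j : ℕ → ℕ)
    (hi : StrictMonoOn i (Set.Iio m)) (hj : StrictAntiOn j (Set.Iio m))
    (hip : ∀ t < m, p ≤ a (i t)) (hjp : ∀ t < m, a (j t) < p)
    (hij : ∀ s < m, ∀ t < m, i s < j t)
    (b : ℕ → α) (hb : b = (List.range m).foldl (fun f t => swapAt f (i t) (j t)) a) :
    ∀ t < m, b (i t) < p ∧ p ≤ b (j t) := by
  subst hb
  have hA : ∀ n ≤ m, ∀ x, (∀ t < n, x ≠ i t ∧ x ≠ j t) →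
      ((List.range n).foldl (fun f t => swapAt f (i t) (j t)) a) x = a x := by
    intro n
    induction n with
    | zero => intro _ x _; simp
    | succ k ih =>
      intro hk x hx
      rw [List.range_succ, List.foldl_append, List.foldl_cons, List.foldl_nil]
      have h1 := hx k (Nat.lt_succ_self k)
      rw [swapAt, Function.update_of_ne h1.2, Function.update_of_ne h1.1]
      exact ih (Nat.le_of_succ_le hk) x (fun t ht => hx t (ht.trans (Nat.lt_succ_self k)))
  suffices h : ∀ n ≤ m, ∀ t < n,
      ((List.range n).foldl (fun f t => swapAt f (i t) (j t)) a) (i t) = a (j t) ∧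
      ((List.range n).foldl (fun f t => swapAt f (i t) (j t)) a) (j t) = a (i t) by
    intro t ht
    obtain ⟨h1, h2⟩ := h m le_rfl t ht
    rw [h1, h2]
    exact ⟨hjp t ht, hip t ht⟩
  intro n
  induction n with
  | zero => intro _ t ht; omega
  | succ k ih =>
    intro hk t ht
    have hkm : k < m := hk
    rw [List.range_succ, List.foldl_append, List.foldl_cons, List.foldl_nil]
    rcases Nat.lt_or_ge t k with htk | htk
    · have htm : t < m := htk.trans hkm
      have h1 : i t ≠ j k := (hij t htm k hkm).ne
      have h2 : i t ≠ i k := (hi htm hkm htk).ne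
      have h3 : j t ≠ j k := (hj htm hkm htk).ne'
      have h4 : j t ≠ i k := (hij k hkm t htm).ne'
      obtain ⟨e1, e2⟩ := ih (Nat.le_of_succ_le hk) t htk
      rw [swapAt, Function.update_of_ne h1, Function.update_of_ne h2,
        Function.update_of_ne h3, Function.update_of_ne h4]
      exact ⟨e1, e2⟩
    · have htk' : t = k := by omega
      subst htk'
      have hne : i t ≠ j t := (hij t hkm t hkm).ne
      have hFi : ((List.range t).foldl (fun f s => swapAt f (i s) (j s)) a) (i t) = a (i t) := by
        refine hA t (le_of_lt hkm) _ (fun s hs => ?_)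
        have hsm : s < m := hs.trans hkm
        exact ⟨(hi hsm hkm hs).ne', (hij t hkm s hsm).ne⟩
      have hFj : ((List.range t).foldl (fun f s => swapAt f (i s) (j s)) a) (j t) = a (j t) := by
        refine hA t (le_of_lt hkm) _ (fun s hs => ?_)
        have hsm : s < m := hs.trans hkm
        exact ⟨(hij s hsm t hkm).ne', (hj hsm hkm hs).ne⟩
      constructor
      · rw [swapAt, Function.update_of_ne hne, Function.update_self, hFj]
      · rw [swapAt, Function.update_self, hFi]
end
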